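/- arXiv:1404.2047 — 5 statements merged into one kernel-verified Lean document; each statement's English description precedes it below -/
import Mathlib

section
/- For every complex number w with Im w > 0, one has Im( Li₂(w) + log|w| · log(1−w) ) > 0, where log|w| is the real logarithm of |w| and log(1−w) is the principal complex logarithm. -/
open MeasureTheory Complex

noncomputable def mu (z : ℂ) : ℝ :=
  z.im / (‖z‖ ^ 2 * ‖z - 1‖ ^ 2)

noncomputable def Li2 (w : ℂ) : ℂ :=
  -∫ t in (0:ℝ)..1, Complex.log (1 - w * (t : ℂ)) / (t : ℂ)

/-
Put `r = ‖w‖`. For real `x`, the function `x ↦ Im (Li₂ (x w) + log |x w| · log (1 - x w))`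
vanishes at `0` and has derivative `-log (x r) · Im w / |1 - x w|²`, which is positive for
`0 < x < 1/r`. This settles `r ≤ 1`. For `r > 1`, the inversion `x ↦ 1 / (r² x)` fixes `1/r`,
swaps `1/r²` and `1`, and reverses the sign of the derivative's integral (because
`|1 - w / (r² x)| = |1 - x w| / (r x)`), so the integral over `[1/r², 1]` vanishes and only the
positive contribution of `[0, 1/r²]` remains.
-/

open Set intervalIntegral

section

variable {w : ℂ}

lemma norm_pos_of_im_pos (hw : 0 < w.im) : 0 < ‖w‖ :=
  norm_pos_iff.mpr fun h => by simp [h] at hw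

lemma one_sub_mul_ofReal_mem_slitPlane (hw : 0 < w.im) (x : ℝ) : 1 - w * x ∈ slitPlane := by
  rcases eq_or_ne x 0 with rfl | hx
  · simp
  · exact mem_slitPlane_iff.mpr (Or.inr (by simpa using mul_ne_zero hw.ne' hx))

lemma im_div_one_sub_mul_ofReal (x : ℝ) :
    (w / (1 - w * x)).im = w.im / normSq (1 - w * x) := by
  rw [div_im]
  simp only [sub_re, sub_im, one_re, one_im, mul_re, mul_im, ofReal_re, ofReal_im]
  ring

lemma normSq_one_sub_mul_inv (hw : w ≠ 0) {x : ℝ} (hx : x ≠ 0) :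
    normSq (1 - w * ((‖w‖ ^ 2 * x)⁻¹ : ℝ)) * (‖w‖ ^ 2 * x ^ 2) = normSq (1 - w * x) := by
  have hn : ‖w‖ ^ 2 = w.re ^ 2 + w.im ^ 2 := by rw [Complex.sq_norm, normSq_apply]; ring
  have hn0 : w.re ^ 2 + w.im ^ 2 ≠ 0 := by rw [← hn]; positivity
  simp only [normSq_apply, sub_re, sub_im, one_re, one_im, mul_re, mul_im, ofReal_re,
    ofReal_im, hn]
  field_simp
  ring

noncomputable def logOneSubMul (w : ℂ) (x : ℝ) : ℂ := log (1 - w * x)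

lemma hasDerivAt_logOneSubMul (hw : 0 < w.im) (x : ℝ) :
    HasDerivAt (logOneSubMul w) (-w / (1 - w * x)) x := by
  have h : HasDerivAt (fun x : ℝ => 1 - w * x) (-w) x := by
    simpa using ((hasDerivAt_id x).ofReal_comp.const_mul w).const_sub 1
  exact h.clog_real (one_sub_mul_ofReal_mem_slitPlane hw x)

lemma continuous_dslope_logOneSubMul (hw : 0 < w.im) : Continuous (dslope (logOneSubMul w) 0) :=
  continuousOn_univ.mp <| (continuousOn_dslope Filter.univ_mem).mpr
    ⟨fun x _ => (hasDerivAt_logOneSubMul hw x).continuousAt.continuousWithinAt,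
      (hasDerivAt_logOneSubMul hw 0).differentiableAt⟩

lemma smul_dslope_logOneSubMul (x : ℝ) : x • dslope (logOneSubMul w) 0 x = logOneSubMul w x := by
  simpa using sub_smul_dslope_of_zero (f := logOneSubMul w) (a := 0) (by simp [logOneSubMul]) x

-- `negDilogRay w x = -Li2 (x * w)`, by the substitution `t ↦ x t` in the integral defining `Li2`
noncomputable def negDilogRay (w : ℂ) (x : ℝ) : ℂ := ∫ t in 0..x, dslope (logOneSubMul w) 0 t

lemma Li2_eq_neg_negDilogRay_one (w : ℂ) : Li2 w = -negDilogRay w 1 := by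
  rw [Li2, negDilogRay]
  congr 1
  refine integral_congr_ae (Filter.Eventually.of_forall fun t ht => ?_)
  rw [uIoc_of_le zero_le_one] at ht
  rw [dslope_of_ne _ ht.1.ne', slope_def_module]
  simp [logOneSubMul, real_smul, div_eq_inv_mul]

lemma hasDerivAt_negDilogRay (hw : 0 < w.im) (x : ℝ) :
    HasDerivAt (negDilogRay w) (dslope (logOneSubMul w) 0 x) x :=
  ((continuous_dslope_logOneSubMul hw).integral_hasStrictDerivAt 0 x).hasDerivAt

-- the Bloch–Wigner function at `x * w`
noncomputable def blochWignerRay (w : ℂ) (x : ℝ) : ℝ :=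
  Real.log (x * ‖w‖) * (logOneSubMul w x).im - (negDilogRay w x).im

noncomputable def blochWignerRayDeriv (w : ℂ) (x : ℝ) : ℝ :=
  -Real.log (x * ‖w‖) * (w.im / normSq (1 - w * x))

lemma blochWignerRay_one (w : ℂ) :
    blochWignerRay w 1 = (Li2 w + (Real.log ‖w‖ : ℂ) * log (1 - w)).im := by
  simp [blochWignerRay, Li2_eq_neg_negDilogRay_one, logOneSubMul]
  ring

lemma blochWignerRay_zero (w : ℂ) : blochWignerRay w 0 = 0 := by
  simp [blochWignerRay, negDilogRay]

lemma continuous_blochWignerRay (hw : 0 < w.im) : Continuous (blochWignerRay w) := by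
  have hr := (norm_pos_of_im_pos hw).ne'
  -- `log (1 - x w) = x • dslope _ 0 x` turns the factor `log (x r)` into `(x r) log (x r)`,
  -- which is continuous at `0`
  have h : blochWignerRay w = fun x => ‖w‖⁻¹ * ((x * ‖w‖) * Real.log (x * ‖w‖)) *
      (dslope (logOneSubMul w) 0 x).im - (negDilogRay w x).im := by
    funext x
    rw [blochWignerRay, ← smul_dslope_logOneSubMul x, real_smul, mul_im, ofReal_re, ofReal_im]
    field_simp
    ring
  rw [h]
  have := continuous_dslope_logOneSubMul hw
  have := Real.continuous_mul_log.comp (continuous_mul_const ‖w‖)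
  have : Continuous (negDilogRay w) := continuous_iff_continuousAt.mpr fun x =>
    (hasDerivAt_negDilogRay hw x).continuousAt
  fun_prop

lemma hasDerivAt_blochWignerRay (hw : 0 < w.im) {x : ℝ} (hx : 0 < x) :
    HasDerivAt (blochWignerRay w) (blochWignerRayDeriv w x) x := by
  have hr := (norm_pos_of_im_pos hw).ne'
  have hlog : HasDerivAt (fun x : ℝ => Real.log (x * ‖w‖)) x⁻¹ x := by
    convert ((hasDerivAt_id' x).mul_const ‖w‖).log (mul_ne_zero hx.ne' hr) using 1
    field_simp
  have hA : HasDerivAt (fun x => (logOneSubMul w x).im) (-w / (1 - w * x)).im x :=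
    imCLM.hasFDerivAt.comp_hasDerivAt x (hasDerivAt_logOneSubMul hw x)
  have hJ : HasDerivAt (fun x => (negDilogRay w x).im) (dslope (logOneSubMul w) 0 x).im x :=
    imCLM.hasFDerivAt.comp_hasDerivAt x (hasDerivAt_negDilogRay hw x)
  have hslope : (dslope (logOneSubMul w) 0 x).im = x⁻¹ * (logOneSubMul w x).im := by
    rw [← smul_dslope_logOneSubMul x, real_smul, mul_im, ofReal_re, ofReal_im]
    field_simp
    ring
  have hderiv : blochWignerRayDeriv w x = x⁻¹ * (logOneSubMul w x).im +
      Real.log (x * ‖w‖) * (-w / (1 - w * x)).im - (dslope (logOneSubMul w) 0 x).im := by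
    rw [hslope, neg_div, neg_im, im_div_one_sub_mul_ofReal, blochWignerRayDeriv]
    ring
  rw [hderiv]
  exact (hlog.mul hA).sub hJ

lemma continuous_im_div_normSq_one_sub_mul (hw : 0 < w.im) :
    Continuous fun x : ℝ => w.im / normSq (1 - w * x) :=
  continuous_const.div (by fun_prop) fun x =>
    (normSq_pos.mpr (slitPlane_ne_zero (one_sub_mul_ofReal_mem_slitPlane hw x))).ne'

lemma intervalIntegrable_blochWignerRayDeriv (hw : 0 < w.im) (a b : ℝ) :
    IntervalIntegrable (blochWignerRayDeriv w) volume a b := by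
  have hlog : IntervalIntegrable (fun x => Real.log (x * ‖w‖)) volume a b := by
    have hr := (norm_pos_of_im_pos hw).ne'
    simpa [hr] using (intervalIntegrable_log' (a := a * ‖w‖) (b := b * ‖w‖)).comp_mul_right
      (c := ‖w‖)
  exact hlog.neg.mul_continuousOn (continuous_im_div_normSq_one_sub_mul hw).continuousOn

lemma blochWignerRay_eq_integral (hw : 0 < w.im) {b : ℝ} (hb : 0 ≤ b) :
    blochWignerRay w b = ∫ x in 0..b, blochWignerRayDeriv w x := by
  rw [integral_eq_sub_of_hasDerivAt_of_le hb (continuous_blochWignerRay hw).continuousOn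
    (fun x hx => hasDerivAt_blochWignerRay hw hx.1) (intervalIntegrable_blochWignerRayDeriv hw 0 b),
    blochWignerRay_zero, sub_zero]

lemma blochWignerRayDeriv_pos (hw : 0 < w.im) {x : ℝ} (hx : 0 < x) (hxr : x * ‖w‖ < 1) :
    0 < blochWignerRayDeriv w x := by
  have hlog : Real.log (x * ‖w‖) < 0 := Real.log_neg (mul_pos hx (norm_pos_of_im_pos hw)) hxr
  have hN : 0 < normSq (1 - w * x) :=
    normSq_pos.mpr (slitPlane_ne_zero (one_sub_mul_ofReal_mem_slitPlane hw x))
  exact mul_pos (neg_pos.mpr hlog) (div_pos hw hN)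

lemma integral_blochWignerRayDeriv_pos (hw : 0 < w.im) {b : ℝ} (hb : 0 < b)
    (hbr : b * ‖w‖ ≤ 1) : 0 < ∫ x in 0..b, blochWignerRayDeriv w x := by
  have hr := norm_pos_of_im_pos hw
  refine intervalIntegral_pos_of_pos_on (intervalIntegrable_blochWignerRayDeriv hw 0 b)
    (fun x hx => blochWignerRayDeriv_pos hw hx.1 ?_) hb
  nlinarith [hx.2]

lemma blochWignerRayDeriv_inv (hw : w ≠ 0) {y : ℝ} (hy : y ≠ 0) :
    blochWignerRayDeriv w (‖w‖ ^ 2 * y)⁻¹ * -(‖w‖ ^ 2 * y ^ 2)⁻¹ = blochWignerRayDeriv w y := by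
  have hN := normSq_one_sub_mul_inv hw hy
  have hlog : Real.log ((‖w‖ ^ 2 * y)⁻¹ * ‖w‖) = -Real.log (y * ‖w‖) := by
    rw [← Real.log_inv]; congr 1; field_simp
  rw [blochWignerRayDeriv, blochWignerRayDeriv, hlog, ← hN]
  field_simp

lemma continuousOn_blochWignerRayDeriv (hw : 0 < w.im) :
    ContinuousOn (blochWignerRayDeriv w) (Ioi 0) := by
  have hr := (norm_pos_of_im_pos hw).ne'
  have hlog : ContinuousOn (fun x : ℝ => Real.log (x * ‖w‖)) (Ioi 0) :=
    Real.continuousOn_log.comp (continuous_mul_const _).continuousOn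
      fun x hx => mul_ne_zero (ne_of_gt hx) hr
  exact hlog.neg.mul (continuous_im_div_normSq_one_sub_mul hw).continuousOn

lemma integral_blochWignerRayDeriv_inv (hw : 0 < w.im) {a b : ℝ} (ha : 0 < a) (hb : 0 < b) :
    ∫ x in (‖w‖ ^ 2 * a)⁻¹..(‖w‖ ^ 2 * b)⁻¹, blochWignerRayDeriv w x
      = ∫ x in a..b, blochWignerRayDeriv w x := by
  have hw0 : w ≠ 0 := norm_pos_iff.mp (norm_pos_of_im_pos hw)
  have hpos : ∀ x ∈ uIcc a b, 0 < x := fun x hx => lt_of_lt_of_le (lt_min ha hb) hx.1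
  rw [← integral_comp_mul_deriv' (f := fun x => (‖w‖ ^ 2 * x)⁻¹)
    (f' := fun x => -(‖w‖ ^ 2 * x ^ 2)⁻¹)]
  · exact integral_congr fun x hx => blochWignerRayDeriv_inv hw0 (hpos x hx).ne'
  · intro x hx
    have hx0 := (hpos x hx).ne'
    refine ((hasDerivAt_inv (by positivity)).comp x
      ((hasDerivAt_id' x).const_mul (‖w‖ ^ 2))).congr_deriv ?_
    field_simp
  · exact (ContinuousOn.inv₀ (by fun_prop) fun x hx => by have := hpos x hx; positivity).neg
  · refine (continuousOn_blochWignerRayDeriv hw).mono ?_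
    rintro _ ⟨x, hx, rfl⟩
    have := hpos x hx
    exact (by positivity : (0:ℝ) < (‖w‖ ^ 2 * x)⁻¹)

lemma integral_blochWignerRayDeriv_inv_sq_one (hw : 0 < w.im) :
    ∫ x in (‖w‖ ^ 2)⁻¹..1, blochWignerRayDeriv w x = 0 := by
  have hr := norm_pos_of_im_pos hw
  have hint := intervalIntegrable_blochWignerRayDeriv hw
  have hinv := integral_blochWignerRayDeriv_inv hw (a := ‖w‖⁻¹) (b := (‖w‖ ^ 2)⁻¹)
    (by positivity) (by positivity)
  have e1 : (‖w‖ ^ 2 * ‖w‖⁻¹)⁻¹ = ‖w‖⁻¹ := by field_simp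
  have e2 : (‖w‖ ^ 2 * (‖w‖ ^ 2)⁻¹)⁻¹ = 1 := by field_simp
  rw [e1, e2] at hinv
  rw [← integral_add_adjacent_intervals (b := ‖w‖⁻¹) (hint _ _) (hint _ _), hinv,
    integral_add_adjacent_intervals (hint _ _) (hint _ _), integral_same]

lemma integral_blochWignerRayDeriv_zero_one_pos (hw : 0 < w.im) :
    0 < ∫ x in 0..1, blochWignerRayDeriv w x := by
  have hr := norm_pos_of_im_pos hw
  have hint := intervalIntegrable_blochWignerRayDeriv hw
  rcases le_or_gt ‖w‖ 1 with hr1 | hr1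
  · exact integral_blochWignerRayDeriv_pos hw one_pos (by simpa using hr1)
  · rw [← integral_add_adjacent_intervals (b := (‖w‖ ^ 2)⁻¹) (hint _ _) (hint _ _),
      integral_blochWignerRayDeriv_inv_sq_one hw, add_zero]
    refine integral_blochWignerRayDeriv_pos hw (by positivity) ?_
    rw [sq, mul_inv, mul_assoc, inv_mul_cancel₀ hr.ne', mul_one]
    exact inv_le_one_of_one_le₀ hr1.le

end

theorem stmt_3 (w : ℂ) (hw : 0 < w.im) :
    0 < (Li2 w + (Real.log ‖w‖ : ℂ) * Complex.log (1 - w)).im := by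
  rw [← blochWignerRay_one, blochWignerRay_eq_integral hw zero_le_one]
  exact integral_blochWignerRayDeriv_zero_one_pos hw
end

section
/- For every complex number w, the integral over all of ℂ of log|z−w| · μ(z) with respect to Lebesgue measure equals the integral over the open unit disk {z : |z| < 1} of ( log|z−w| − log|1−w·z| ) · μ(z). (Reduction of the full-plane integral to the unit disk via the involution z ↦ 1/z.) -/
open MeasureTheory Complex

/-!
The inversion `z ↦ 1/z` maps the punctured unit disk onto the exterior of the closed unit disk,
with Jacobian `‖u‖⁻⁴`. Since `μ(1/u) = -‖u‖⁴ μ(u)` and `log ‖1/u - w‖ = log ‖1 - w u‖ - log ‖u‖`,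
the exterior contributes `∫_{‖u‖<1} (log ‖u‖ - log ‖1 - w u‖) μ(u)`, and the term with `log ‖u‖`
vanishes because `μ` is odd under complex conjugation. Integrability of the integrand near its
singularities at `0`, `1` and `w` comes from bounding it by powers `‖z - p‖^(-3/2)`, which are
locally integrable in the plane.
-/

open ComplexConjugate Metric Set Filter

section Jacobian

variable {E : Type*} [NormedAddCommGroup E] [NormedSpace ℝ E] {s : Set ℂ} {f f' : ℂ → ℂ}

theorem Complex.det_restrictScalars_toSpanSingleton (c : ℂ) :
    ((ContinuousLinearMap.toSpanSingleton ℂ c).restrictScalars ℝ).det = ‖c‖ ^ 2 := by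
  simp [ContinuousLinearMap.det, LinearMap.det_restrictScalars, Algebra.norm_complex_eq,
    normSq_eq_norm_sq]

theorem Complex.integrableOn_image_iff_integrableOn_norm_deriv_sq_smul (hs : MeasurableSet s)
    (hf' : ∀ x ∈ s, HasDerivWithinAt f (f' x) s x) (hf : InjOn f s) (g : ℂ → E) :
    IntegrableOn g (f '' s) ↔ IntegrableOn (fun x => ‖f' x‖ ^ 2 • g (f x)) s := by
  simpa only [det_restrictScalars_toSpanSingleton, abs_sq] using
    integrableOn_image_iff_integrableOn_abs_det_fderiv_smul volume hs
      (fun x hx => (hf' x hx).hasFDerivWithinAt.restrictScalars ℝ) hf g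

theorem Complex.integral_image_eq_integral_norm_deriv_sq_smul (hs : MeasurableSet s)
    (hf' : ∀ x ∈ s, HasDerivWithinAt f (f' x) s x) (hf : InjOn f s) (g : ℂ → E) :
    ∫ x in f '' s, g x = ∫ x in s, ‖f' x‖ ^ 2 • g (f x) := by
  simpa only [det_restrictScalars_toSpanSingleton, abs_sq] using
    integral_image_eq_integral_abs_det_fderiv_smul volume hs
      (fun x hx => (hf' x hx).hasFDerivWithinAt.restrictScalars ℝ) hf g

theorem Complex.norm_neg_inv_sq_sq (u : ℂ) : ‖-(u ^ 2)⁻¹‖ ^ 2 = (‖u‖ ^ 4)⁻¹ := by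
  simp [← pow_mul]

theorem Complex.integrableOn_image_inv_iff (hs : MeasurableSet s) (h0 : 0 ∉ s) (g : ℂ → E) :
    IntegrableOn g (Inv.inv '' s) ↔ IntegrableOn (fun u => (‖u‖ ^ 4)⁻¹ • g u⁻¹) s := by
  simpa only [norm_neg_inv_sq_sq] using integrableOn_image_iff_integrableOn_norm_deriv_sq_smul hs
    (fun u hu => (hasDerivAt_inv (ne_of_mem_of_not_mem hu h0)).hasDerivWithinAt)
    inv_injective.injOn g

theorem Complex.integral_image_inv (hs : MeasurableSet s) (h0 : 0 ∉ s) (g : ℂ → E) :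
    ∫ z in Inv.inv '' s, g z = ∫ u in s, (‖u‖ ^ 4)⁻¹ • g u⁻¹ := by
  simpa only [norm_neg_inv_sq_sq] using integral_image_eq_integral_norm_deriv_sq_smul hs
    (fun u hu => (hasDerivAt_inv (ne_of_mem_of_not_mem hu h0)).hasDerivWithinAt)
    inv_injective.injOn g

end Jacobian

theorem Complex.image_inv_ball_sdiff_zero :
    Inv.inv '' (ball (0 : ℂ) 1 \ {0}) = (closedBall 0 1)ᶜ := by
  rw [image_eq_preimage_of_inverse inv_inv inv_inv]
  ext z
  rcases eq_or_ne z 0 with rfl | hz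
  · simp
  · simp [hz, inv_lt_one₀ (norm_pos_iff.2 hz)]

theorem Complex.setIntegral_eq_zero_of_conj_odd {E : Type*} [NormedAddCommGroup E]
    [NormedSpace ℝ E] {s : Set ℂ} (hs : conj ⁻¹' s = s) {f : ℂ → E}
    (hf : ∀ z, f (conj z) = -f z) : ∫ z in s, f z = 0 := by
  have h := conjLIE.measurePreserving.setIntegral_preimage_emb
    conjLIE.toHomeomorph.measurableEmbedding f s
  rw [show ⇑conjLIE = conj from rfl, hs] at h
  simp only [hf, integral_neg, neg_eq_iff_eq_neg, eq_neg_iff_add_eq_zero, ← two_smul ℝ,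
    smul_eq_zero] at h
  exact h.resolve_left two_ne_zero

theorem MeasureTheory.Measure.closedBall_ae_eq_ball {E : Type*} [NormedAddCommGroup E]
    [NormedSpace ℝ E] [Nontrivial E] [FiniteDimensional ℝ E] [MeasurableSpace E] [BorelSpace E]
    (μ : Measure E) [μ.IsAddHaarMeasure] (x : E) (r : ℝ) : closedBall x r =ᵐ[μ] ball x r := by
  rw [ae_eq_set, closedBall_sdiff_ball, sdiff_eq_empty.2 ball_subset_closedBall]
  exact ⟨addHaar_sphere μ x r, measure_empty⟩

theorem MeasureTheory.LocallyIntegrable.integrableOn_ball {X E : Type*} [PseudoMetricSpace X]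
    [ProperSpace X] [MeasurableSpace X] [NormedAddCommGroup E] {μ : Measure X} {f : X → E}
    (hf : LocallyIntegrable f μ) (x : X) (r : ℝ) : IntegrableOn f (ball x r) μ :=
  (hf.integrableOn_isCompact (isCompact_closedBall x r)).mono_set ball_subset_closedBall

theorem locallyIntegrable_norm_sub_rpow_neg {E : Type*} [NormedAddCommGroup E] [NormedSpace ℝ E]
    [FiniteDimensional ℝ E] [MeasurableSpace E] [BorelSpace E] {μ : Measure E}
    [μ.IsAddHaarMeasure] (hd : 1 ≤ Module.finrank ℝ E) {α : ℝ} (hα : α < Module.finrank ℝ E)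
    (p : E) : LocallyIntegrable (fun x => ‖x - p‖ ^ (-α)) μ := by
  have h0 : LocallyIntegrable (fun x : E => ‖x‖ ^ (-α)) μ :=
    locallyIntegrable_of_norm_le_rpow hd hα (C := 1)
      (ae_of_all _ fun x => by simp [abs_of_nonneg (Real.rpow_nonneg (norm_nonneg x) _)])
      (measurable_norm.pow_const _).aestronglyMeasurable
  rw [← (measurePreserving_sub_right μ p).map_eq] at h0
  exact (locallyIntegrable_map_homeomorph (Homeomorph.subRight p)).1 h0

theorem Complex.integrableOn_norm_sub_rpow_neg {K : Set ℂ} (hK : IsCompact K) {α : ℝ}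
    (hα : α < 2) (p : ℂ) : IntegrableOn (fun z => ‖z - p‖ ^ (-α)) K :=
  (locallyIntegrable_norm_sub_rpow_neg (by simp) (by simpa) p).integrableOn_isCompact hK

theorem Real.abs_log_le_two_mul_rpow_neg_half_add {t M : ℝ} (ht : 0 ≤ t) (htM : t ≤ M) :
    |Real.log t| ≤ 2 * t ^ (-(1 / 2 : ℝ)) + M := by
  have hrpow : 0 ≤ t ^ (-(1 / 2 : ℝ)) := Real.rpow_nonneg ht _
  rcases ht.eq_or_lt with rfl | ht
  · simp only [Real.log_zero, abs_zero]; linarith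
  rw [abs_le]
  constructor
  · have := Real.log_le_rpow_div (inv_nonneg.2 ht.le) (by norm_num : (0 : ℝ) < 1 / 2)
    rw [Real.log_inv, Real.inv_rpow ht.le, ← Real.rpow_neg ht.le] at this
    linarith
  · linarith [Real.log_le_sub_one_of_pos ht]

theorem Real.rpow_neg_half_mul_inv_le {x y : ℝ} (hx : 0 ≤ x) (hy : 0 ≤ y) :
    x ^ (-(1 / 2 : ℝ)) * y⁻¹ ≤ x ^ (-(3 / 2 : ℝ)) + y ^ (-(3 / 2 : ℝ)) := by
  have hx' : 0 ≤ x ^ (-(3 / 2 : ℝ)) := Real.rpow_nonneg hx _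
  have hy' : 0 ≤ y ^ (-(3 / 2 : ℝ)) := Real.rpow_nonneg hy _
  have key {u : ℝ} (hu : 0 < u) : u ^ (-(1 / 2 : ℝ)) * u⁻¹ = u ^ (-(3 / 2 : ℝ)) := by
    rw [← Real.rpow_neg_one, ← Real.rpow_add hu]; norm_num
  rcases hx.eq_or_lt with rfl | hx
  · rw [Real.zero_rpow (by norm_num), zero_mul]; positivity
  rcases hy.eq_or_lt with rfl | hy
  · rw [inv_zero, mul_zero]; positivity
  rcases le_total x y with h | h
  · calc x ^ (-(1 / 2 : ℝ)) * y⁻¹ ≤ x ^ (-(1 / 2 : ℝ)) * x⁻¹ := by gcongr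
      _ ≤ _ := by rw [key hx]; linarith
  · calc x ^ (-(1 / 2 : ℝ)) * y⁻¹ ≤ y ^ (-(1 / 2 : ℝ)) * y⁻¹ := by
          have := Real.rpow_le_rpow_of_nonpos hy h (by norm_num : -(1 / 2 : ℝ) ≤ 0)
          gcongr
      _ ≤ _ := by rw [key hy]; linarith

theorem Complex.log_norm_inv_sub {u w : ℂ} (hu : u ≠ 0) (hwu : 1 - w * u ≠ 0) :
    Real.log ‖u⁻¹ - w‖ = Real.log ‖1 - w * u‖ - Real.log ‖u‖ := by
  have : u⁻¹ - w = (1 - w * u) / u := by field_simp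
  rw [this, norm_div, Real.log_div (by simpa) (by simpa)]

theorem Complex.log_norm_one_sub_mul {w z : ℂ} (hw : w ≠ 0) (hz : z ≠ w⁻¹) :
    Real.log ‖1 - w * z‖ = Real.log ‖w‖ + Real.log ‖z - w⁻¹‖ := by
  have : 1 - w * z = -w * (z - w⁻¹) := by field_simp; ring
  rw [this, norm_mul, norm_neg, Real.log_mul (by simpa) (by simpa [sub_eq_zero])]

@[fun_prop]
theorem measurable_mu : Measurable mu := by
  unfold mu; fun_prop

theorem mu_conj (z : ℂ) : mu (conj z) = -mu z := by
  have : conj z - 1 = conj (z - 1) := by simp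
  rw [mu, mu, conj_im, this, norm_conj, norm_conj, neg_div]

theorem mu_inv (z : ℂ) : mu z⁻¹ = -(‖z‖ ^ 4 * mu z) := by
  rcases eq_or_ne z 0 with rfl | hz
  · simp [mu]
  have hz' : ‖z‖ ≠ 0 := norm_ne_zero_iff.2 hz
  have : z⁻¹ - 1 = (1 - z) / z := by field_simp
  rw [mu, mu, inv_im, norm_inv, this, norm_div, norm_sub_rev, normSq_eq_norm_sq]
  field_simp

-- Since `‖z‖ + ‖z - 1‖ ≥ 1`, one of the two factors of the denominator is at least `1 / 2`.
theorem abs_mu_le (z : ℂ) : |mu z| ≤ 4 * (‖z‖⁻¹ + ‖z - 1‖⁻¹) := by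
  rcases eq_or_ne z 0 with rfl | h0
  · simp [mu]
  rcases eq_or_ne z 1 with rfl | h1
  · simp [mu]
  have ha : 0 < ‖z‖ := norm_pos_iff.2 h0
  have hb : 0 < ‖z - 1‖ := norm_pos_iff.2 (sub_ne_zero.2 h1)
  have him_a : |z.im| ≤ ‖z‖ := abs_im_le_norm z
  have him_b : |z.im| ≤ ‖z - 1‖ := by simpa using abs_im_le_norm (z - 1)
  have htri : 1 ≤ ‖z‖ + ‖z - 1‖ := by simpa [norm_sub_rev] using norm_add_le z (1 - z)
  rw [mu, abs_div, abs_of_pos (a := ‖z‖ ^ 2 * ‖z - 1‖ ^ 2) (by positivity),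
    div_le_iff₀ (by positivity)]
  set a := ‖z‖
  set b := ‖z - 1‖
  have hexp : 4 * (a⁻¹ + b⁻¹) * (a ^ 2 * b ^ 2) = 4 * a * b ^ 2 + 4 * a ^ 2 * b := by
    field_simp
  rw [hexp]
  rcases le_total a b with hab | hab <;> nlinarith [mul_pos ha hb]

theorem locallyIntegrable_mu : LocallyIntegrable mu := by
  rw [locallyIntegrable_iff]
  intro K hK
  have hdom : IntegrableOn (fun z => 4 * (‖z‖ ^ (-1 : ℝ) + ‖z - 1‖ ^ (-1 : ℝ))) K := by
    have h0 : IntegrableOn (fun z : ℂ => ‖z‖ ^ (-1 : ℝ)) K := by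
      simpa using integrableOn_norm_sub_rpow_neg hK (by norm_num : (1 : ℝ) < 2) 0
    exact (h0.add (integrableOn_norm_sub_rpow_neg hK (by norm_num) 1)).const_mul 4
  refine hdom.mono' measurable_mu.aestronglyMeasurable (ae_of_all _ fun z => ?_)
  simpa only [Real.rpow_neg_one, Real.norm_eq_abs] using abs_mu_le z

theorem locallyIntegrable_log_norm_sub_mul_mu (a : ℂ) :
    LocallyIntegrable fun z => Real.log ‖z - a‖ * mu z := by
  rw [locallyIntegrable_iff]
  intro K hK
  obtain ⟨R, hR0, hR⟩ := hK.isBounded.exists_pos_norm_le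
  set M := R + ‖a‖
  have hM0 : 0 ≤ M := by positivity
  have h32 (p : ℂ) := integrableOn_norm_sub_rpow_neg hK (by norm_num : (3 / 2 : ℝ) < 2) p
  have h1 (p : ℂ) := integrableOn_norm_sub_rpow_neg hK (by norm_num : (1 : ℝ) < 2) p
  have hdom : IntegrableOn (fun z => 16 * ‖z - a‖ ^ (-(3 / 2 : ℝ)) + 8 * ‖z‖ ^ (-(3 / 2 : ℝ)) +
      8 * ‖z - 1‖ ^ (-(3 / 2 : ℝ)) + 4 * M * (‖z‖ ^ (-1 : ℝ) + ‖z - 1‖ ^ (-1 : ℝ))) K := by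
    have h32₀ : IntegrableOn (fun z : ℂ => ‖z‖ ^ (-(3 / 2 : ℝ))) K := by simpa using h32 0
    have h1₀ : IntegrableOn (fun z : ℂ => ‖z‖ ^ (-1 : ℝ)) K := by simpa using h1 0
    exact ((((h32 a).const_mul 16).add (h32₀.const_mul 8)).add ((h32 1).const_mul 8)).add
      ((h1₀.add (h1 1)).const_mul (4 * M))
  refine hdom.mono' (by fun_prop) (ae_restrict_of_forall_mem hK.measurableSet fun z hz => ?_)
  have ht : ‖z - a‖ ≤ M := (norm_sub_le _ _).trans (by linarith [hR z hz])
  rw [norm_mul, Real.norm_eq_abs, Real.norm_eq_abs, Real.rpow_neg_one, Real.rpow_neg_one]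
  have hz := Real.rpow_neg_half_mul_inv_le (norm_nonneg (z - a)) (norm_nonneg z)
  have hz1 := Real.rpow_neg_half_mul_inv_le (norm_nonneg (z - a)) (norm_nonneg (z - 1))
  calc |Real.log ‖z - a‖| * |mu z|
      ≤ (2 * ‖z - a‖ ^ (-(1 / 2 : ℝ)) + M) * (4 * (‖z‖⁻¹ + ‖z - 1‖⁻¹)) :=
        mul_le_mul (Real.abs_log_le_two_mul_rpow_neg_half_add (norm_nonneg _) ht) (abs_mu_le z)
          (abs_nonneg _) (add_nonneg (by positivity) hM0)
    _ = 8 * (‖z - a‖ ^ (-(1 / 2 : ℝ)) * ‖z‖⁻¹) + 8 * (‖z - a‖ ^ (-(1 / 2 : ℝ)) * ‖z - 1‖⁻¹) +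
        4 * M * (‖z‖⁻¹ + ‖z - 1‖⁻¹) := by ring
    _ ≤ _ := by linarith

theorem locallyIntegrable_log_norm_mul_mu : LocallyIntegrable fun z => Real.log ‖z‖ * mu z := by
  simpa using locallyIntegrable_log_norm_sub_mul_mu 0

theorem locallyIntegrable_log_norm_one_sub_mul_mul_mu (w : ℂ) :
    LocallyIntegrable fun z => Real.log ‖1 - w * z‖ * mu z := by
  rcases eq_or_ne w 0 with rfl | hw
  · simpa using (locallyIntegrable_zero : LocallyIntegrable (0 : ℂ → ℝ))
  refine ((locallyIntegrable_mu.smul (Real.log ‖w‖)).add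
    (locallyIntegrable_log_norm_sub_mul_mu w⁻¹)).congr ?_
  filter_upwards [Measure.ae_ne volume w⁻¹] with z hz
  simp [log_norm_one_sub_mul hw hz, add_mul]

theorem integral_ball_log_norm_mul_mu : ∫ z in ball (0 : ℂ) 1, Real.log ‖z‖ * mu z = 0 :=
  setIntegral_eq_zero_of_conj_odd (by ext; simp) fun z => by simp [mu_conj]

theorem inv_pullback_log_norm_sub_mul_mu_ae_eq (w : ℂ) :
    (fun u : ℂ => (‖u‖ ^ 4)⁻¹ • (Real.log ‖u⁻¹ - w‖ * mu u⁻¹)) =ᵐ[volume]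
      fun u => Real.log ‖u‖ * mu u - Real.log ‖1 - w * u‖ * mu u := by
  filter_upwards [Measure.ae_ne volume 0, Measure.ae_ne volume w⁻¹] with u hu0 huw
  have hwu : 1 - w * u ≠ 0 := fun h => huw (eq_inv_of_mul_eq_one_right (sub_eq_zero.1 h).symm)
  have : ‖u‖ ^ 4 ≠ 0 := by positivity
  rw [log_norm_inv_sub hu0 hwu, mu_inv, smul_eq_mul]
  field_simp
  ring

theorem integrableOn_compl_closedBall_log_norm_sub_mul_mu (w : ℂ) :
    IntegrableOn (fun z => Real.log ‖z - w‖ * mu z) (closedBall 0 1)ᶜ := by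
  rw [← image_inv_ball_sdiff_zero, integrableOn_image_inv_iff
    (measurableSet_ball.diff (measurableSet_singleton 0)) (fun h => h.2 rfl)]
  refine IntegrableOn.congr_fun_ae ?_
    (EventuallyEq.symm (ae_restrict_of_ae (inv_pullback_log_norm_sub_mul_mu_ae_eq w)))
  exact ((locallyIntegrable_log_norm_mul_mu.sub
    (locallyIntegrable_log_norm_one_sub_mul_mul_mu w)).integrableOn_ball 0 1).mono_set
    sdiff_subset

theorem integral_compl_closedBall_log_norm_sub_mul_mu (w : ℂ) :
    ∫ z in (closedBall 0 1)ᶜ, Real.log ‖z - w‖ * mu z =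
      -∫ z in ball 0 1, Real.log ‖1 - w * z‖ * mu z := by
  rw [← image_inv_ball_sdiff_zero, integral_image_inv
      (measurableSet_ball.diff (measurableSet_singleton 0)) (fun h => h.2 rfl),
    integral_congr_ae (ae_restrict_of_ae (inv_pullback_log_norm_sub_mul_mu_ae_eq w)),
    setIntegral_congr_set (sdiff_null_ae_eq_self (measure_singleton 0)),
    integral_sub (locallyIntegrable_log_norm_mul_mu.integrableOn_ball 0 1)
      ((locallyIntegrable_log_norm_one_sub_mul_mul_mu w).integrableOn_ball 0 1),
    integral_ball_log_norm_mul_mu, zero_sub]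

theorem integrable_log_norm_sub_mul_mu (w : ℂ) :
    Integrable fun z => Real.log ‖z - w‖ * mu z := by
  rw [← integrableOn_univ, ← union_compl_self (closedBall 0 1)]
  exact ((locallyIntegrable_log_norm_sub_mul_mu w).integrableOn_isCompact
    (isCompact_closedBall 0 1)).union (integrableOn_compl_closedBall_log_norm_sub_mul_mu w)

theorem stmt_8 (w : ℂ) :
    ∫ z : ℂ, Real.log ‖z - w‖ * mu z =
      ∫ z in {z : ℂ | ‖z‖ < 1},
        (Real.log ‖z - w‖ - Real.log ‖1 - w * z‖) * mu z := by
  have hball : {z : ℂ | ‖z‖ < 1} = ball 0 1 := by ext; simp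
  simp only [hball, sub_mul]
  rw [← integral_add_compl measurableSet_closedBall (integrable_log_norm_sub_mul_mu w),
    setIntegral_congr_set (Measure.closedBall_ae_eq_ball volume 0 1),
    integral_compl_closedBall_log_norm_sub_mul_mu, ← sub_eq_add_neg,
    integral_sub ((locallyIntegrable_log_norm_sub_mul_mu w).integrableOn_ball 0 1)
      ((locallyIntegrable_log_norm_one_sub_mul_mul_mu w).integrableOn_ball 0 1)]
end

section
/- The iterated integral (1/2)·∫₀^{1/2} (s·(1−s))⁴ · ( ∫₀^{s} (u·(1−u))² du ) ds equals 1199/309657600. -/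
theorem integral_sq_mul_one_sub_sq (s : ℝ) :
    ∫ u in (0:ℝ)..s, (u * (1 - u)) ^ 2 = s ^ 3 / 3 - s ^ 4 / 2 + s ^ 5 / 5 := by
  rw [intervalIntegral.integral_deriv_eq_sub' (fun u : ℝ => u ^ 3 / 3 - u ^ 4 / 2 + u ^ 5 / 5)
    (by funext u; simp (disch := fun_prop); ring) (by intros; fun_prop) (by fun_prop)]
  ring

theorem stmt_15 :
    (1 / 2 : ℝ) *
        ∫ s in (0:ℝ)..(1/2), (s * (1 - s)) ^ 4 * ∫ u in (0:ℝ)..s, (u * (1 - u)) ^ 2 =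
      1199 / 309657600 := by
  simp_rw [integral_sq_mul_one_sub_sq]
  rw [intervalIntegral.integral_deriv_eq_sub'
    (fun s : ℝ => s ^ 8 / 24 - 11 * s ^ 9 / 54 + 21 * s ^ 10 / 50 - 7 * s ^ 11 / 15
      + 53 * s ^ 12 / 180 - s ^ 13 / 10 + s ^ 14 / 70)
    (by funext s; simp (disch := fun_prop); ring) (by intros; fun_prop) (by fun_prop)]
  norm_num
end

section
/- The two iterated integrals (1/2)·∫₀^{1/2} (s·(1−s))⁴ · ( ∫₀^{s} (u·(1−u))² du ) ds and (1/2)·∫_{1/2}^{1} (s·(1−s))⁴ · ( ∫_{1/2}^{s} (u·(1−u))² du ) ds are not equal. -/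
/-!
The inner integral has the polynomial primitive `prim₂`, so each iterated integral is the integral
of `(s(1-s))⁴ (prim₂ s - prim₂ c)` and can be evaluated exactly from two further polynomial
primitives. Without the factor `1/2`, the first is `1199/154828800` and the second `849/154828800`.
-/

open intervalIntegral

noncomputable def prim₂ (x : ℝ) : ℝ := x ^ 3 / 3 - x ^ 4 / 2 + x ^ 5 / 5

noncomputable def prim₄ (x : ℝ) : ℝ :=
  x ^ 5 / 5 - 2 * x ^ 6 / 3 + 6 * x ^ 7 / 7 - x ^ 8 / 2 + x ^ 9 / 9

noncomputable def prim₄₂ (x : ℝ) : ℝ :=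
  x ^ 8 / 24 - 11 * x ^ 9 / 54 + 21 * x ^ 10 / 50 - 7 * x ^ 11 / 15 + 53 * x ^ 12 / 180
    - x ^ 13 / 10 + x ^ 14 / 70

lemma deriv_prim₂ : deriv prim₂ = fun x => (x * (1 - x)) ^ 2 := by
  funext x
  unfold prim₂
  simp (disch := fun_prop) only [deriv_fun_add, deriv_fun_sub, deriv_div_const, deriv_fun_pow,
    deriv_id'']
  ring

lemma deriv_prim₄ : deriv prim₄ = fun x => (x * (1 - x)) ^ 4 := by
  funext x
  unfold prim₄
  simp (disch := fun_prop) only [deriv_fun_add, deriv_fun_sub, deriv_fun_mul, deriv_div_const,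
    deriv_fun_pow, deriv_const', deriv_id'']
  ring

lemma deriv_prim₄₂ : deriv prim₄₂ = fun x => (x * (1 - x)) ^ 4 * prim₂ x := by
  funext x
  unfold prim₄₂ prim₂
  simp (disch := fun_prop) only [deriv_fun_add, deriv_fun_sub, deriv_fun_mul, deriv_div_const,
    deriv_fun_pow, deriv_const', deriv_id'']
  ring

lemma integral_mul_one_sub_sq (a b : ℝ) :
    ∫ x in a..b, (x * (1 - x)) ^ 2 = prim₂ b - prim₂ a :=
  integral_deriv_eq_sub' prim₂ deriv_prim₂ (fun _ _ => by unfold prim₂; fun_prop)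
    (by fun_prop)

lemma integral_mul_one_sub_pow_four (a b : ℝ) :
    ∫ x in a..b, (x * (1 - x)) ^ 4 = prim₄ b - prim₄ a :=
  integral_deriv_eq_sub' prim₄ deriv_prim₄ (fun _ _ => by unfold prim₄; fun_prop)
    (by fun_prop)

lemma integral_mul_one_sub_pow_four_mul_prim₂ (a b : ℝ) :
    ∫ x in a..b, (x * (1 - x)) ^ 4 * prim₂ x = prim₄₂ b - prim₄₂ a :=
  integral_deriv_eq_sub' prim₄₂ deriv_prim₄₂ (fun _ _ => by unfold prim₄₂; fun_prop)
    (by unfold prim₂; fun_prop)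

lemma integral_mul_one_sub_pow_four_mul_integral (a b c : ℝ) :
    ∫ s in a..b, (s * (1 - s)) ^ 4 * ∫ u in c..s, (u * (1 - u)) ^ 2
      = (prim₄₂ b - prim₄₂ a) - prim₂ c * (prim₄ b - prim₄ a) := by
  have hcont : Continuous prim₂ := by unfold prim₂; fun_prop
  have hsplit : ∀ s, (s * (1 - s)) ^ 4 * ∫ u in c..s, (u * (1 - u)) ^ 2
      = (s * (1 - s)) ^ 4 * prim₂ s - prim₂ c * (s * (1 - s)) ^ 4 := fun s => by
    rw [integral_mul_one_sub_sq]; ring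
  simp_rw [hsplit]
  rw [integral_sub ((by fun_prop : Continuous _).intervalIntegrable _ _)
      ((by fun_prop : Continuous _).intervalIntegrable _ _), integral_const_mul,
    integral_mul_one_sub_pow_four_mul_prim₂, integral_mul_one_sub_pow_four]

theorem stmt_17 :
    (1 / 2 : ℝ) *
        (∫ s in (0:ℝ)..(1/2), (s * (1 - s)) ^ 4 * ∫ u in (0:ℝ)..s, (u * (1 - u)) ^ 2) ≠
      (1 / 2 : ℝ) *
        (∫ s in (1/2:ℝ)..1, (s * (1 - s)) ^ 4 * ∫ u in (1/2:ℝ)..s, (u * (1 - u)) ^ 2) := by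
  rw [integral_mul_one_sub_pow_four_mul_integral, integral_mul_one_sub_pow_four_mul_integral]
  norm_num [prim₂, prim₄, prim₄₂]
end

section
/- For every complex number w with |w| < 1, the integral over the open unit disk {z ∈ ℂ : |z| < 1} of log|1 − w·z| · μ(z) with respect to Lebesgue measure equals (π/2)·Im( Li₂(w) ), where log|·| is the real logarithm of the modulus. -/
/-!
On the circle `‖z‖ = r < 1` one has `conj z = r² / z`, so with `L z = log (1 - w z)`
  `log ‖1 - w z‖ · μ z = -Im (z / (z - r²) · L z + L z / (z - 1)) / (2 r²)`.
By the Cauchy integral formula the circle average of the right-hand side is `-Im L(r²) / (2 r²)`: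
the pole `r²` lies inside the circle, the pole `1` outside. Integrating in polar coordinates and
substituting `t = r²` turns the disc integral into `-(π/2) ∫₀¹ Im L(t) / t dt = (π/2) Im Li₂ w`.
Fubini applies because `|log ‖1 - w z‖| ≤ log 2 - log (1 - ‖w‖)` on the disc and
`∫ |r μ(r e^{iθ})| dθ = (2/r) log ((1 + r) / (1 - r)) = O((1 - r)^{-1/2})`.
-/

open MeasureTheory Complex

open Set Metric
open scoped Real ComplexConjugate

lemma mu_eq_im_inv_conj_sub_one_sub_inv (z : ℂ) :
    mu z = ((conj z - 1)⁻¹ - (z - 1)⁻¹).im / (2 * ‖z‖ ^ 2) := by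
  have hconj : conj z - 1 = conj (z - 1) := by simp
  rw [hconj, ← map_inv₀, sub_im, conj_im, inv_im, normSq_eq_norm_sq, mu]
  simp only [sub_im, one_im, sub_zero]
  ring

lemma inv_conj_sub_one_of_norm_eq {z : ℂ} {r : ℝ} (hz : ‖z‖ = r) (hr : r ≠ 0) :
    (conj z - 1)⁻¹ = -(z / (z - r ^ 2)) := by
  have hz0 : z ≠ 0 := norm_ne_zero_iff.1 (hz ▸ hr)
  have hconj : conj z = r ^ 2 / z := by
    rw [eq_div_iff hz0, mul_comm, mul_conj', hz]
  rw [hconj]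
  by_cases h : z = r ^ 2
  · simp [h, div_self (pow_ne_zero 2 (ofReal_ne_zero.2 hr))]
  · have : z - r ^ 2 ≠ 0 := sub_ne_zero.2 h
    field_simp
    ring

lemma re_mul_mu_of_norm_eq (a : ℂ) {z : ℂ} {r : ℝ} (hz : ‖z‖ = r) (hr : r ≠ 0) :
    a.re * mu z = -(z * a / (z - r ^ 2) + a / (z - 1)).im / (2 * r ^ 2) := by
  have hre : ((conj z - 1)⁻¹ - (z - 1)⁻¹).re = 0 := by
    have hconj : conj z - 1 = conj (z - 1) := by simp
    rw [hconj, ← map_inv₀, sub_re, conj_re, sub_self]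
  rw [mu_eq_im_inv_conj_sub_one_sub_inv, hz, mul_div_assoc']
  congr 1
  calc a.re * ((conj z - 1)⁻¹ - (z - 1)⁻¹).im = (a * ((conj z - 1)⁻¹ - (z - 1)⁻¹)).im := by
        simp [mul_im, hre]
    _ = _ := by rw [inv_conj_sub_one_of_norm_eq hz hr, ← neg_im]; ring_nf

lemma mul_mu_circleMap {r : ℝ} (hr : r ≠ 0) (θ : ℝ) :
    r * mu (circleMap 0 r θ) = Real.sin θ / (r ^ 2 - 2 * r * Real.cos θ + 1) := by
  have hnorm : ‖circleMap 0 r θ‖ = |r| := by simp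
  have hsub : ‖circleMap 0 r θ - 1‖ ^ 2 = r ^ 2 - 2 * r * Real.cos θ + 1 := by
    rw [← normSq_eq_norm_sq, normSq_apply]
    simp only [sub_re, sub_im, one_re, one_im, circleMap_zero_re, circleMap_zero_im]
    linear_combination r ^ 2 * Real.sin_sq_add_cos_sq θ
  rw [mu, hnorm, hsub, circleMap_zero_im, sq_abs]
  field_simp

lemma one_sub_mem_slitPlane {z : ℂ} (hz : ‖z‖ < 1) : 1 - z ∈ slitPlane := by
  simpa [sub_eq_add_neg] using mem_slitPlane_of_norm_lt_one (z := -z) (by rwa [norm_neg])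

lemma differentiableAt_log_one_sub_mul {w z : ℂ} (h : ‖w * z‖ < 1) :
    DifferentiableAt ℂ (fun z => log (1 - w * z)) z :=
  ((differentiableAt_const _).sub (differentiableAt_id.const_mul w)).clog
    (one_sub_mem_slitPlane h)

lemma norm_mul_lt_one_of_le_one {w z : ℂ} (hw : ‖w‖ < 1) (hz : ‖z‖ ≤ 1) : ‖w * z‖ < 1 := by
  rw [norm_mul]
  exact mul_lt_one_of_nonneg_of_lt_one_left (norm_nonneg w) hw hz

lemma circleIntegrable_div_sub {g : ℂ → ℂ} {c a : ℂ} {R : ℝ} (hR : 0 ≤ R)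
    (hg : ContinuousOn g (sphere c R)) (ha : a ∉ sphere c R) :
    CircleIntegrable (fun z => g z / (z - a)) c R :=
  ContinuousOn.circleIntegrable hR
    (hg.div (by fun_prop) fun _ hz => sub_ne_zero.2 fun h => ha (h ▸ hz))

lemma sq_notMem_sphere_zero {r : ℝ} (hr0 : 0 < r) (hr1 : r < 1) :
    (r : ℂ) ^ 2 ∉ sphere (0 : ℂ) r := by
  simp only [mem_sphere_zero_iff_norm, norm_pow, norm_real, Real.norm_eq_abs, abs_of_pos hr0]
  nlinarith

lemma one_notMem_sphere_zero {r : ℝ} (hr1 : r < 1) : (1 : ℂ) ∉ sphere (0 : ℂ) r := by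
  simp only [mem_sphere_zero_iff_norm, norm_one]
  linarith

open Real (circleAverage circleAverage_fun_add) in
lemma circleAverage_mul_div_sub_sq_add_div_sub_one {f : ℂ → ℂ} {r : ℝ}
    (hf : DifferentiableOn ℂ f (closedBall 0 r)) (hr0 : 0 < r) (hr1 : r < 1) :
    circleAverage (fun z => z * f z / (z - r ^ 2) + f z / (z - 1)) 0 r = f (r ^ 2) - f 0 := by
  have hr : |r| = r := abs_of_pos hr0
  have hdiff : DifferentiableOn ℂ (fun z => f z / (z - 1)) (closedBall 0 r) :=
    hf.div (by fun_prop) fun z hz => sub_ne_zero.2 <| by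
      rintro rfl; rw [mem_closedBall_zero_iff, norm_one] at hz; linarith
  have hsphere : ContinuousOn f (sphere 0 r) := hf.continuousOn.mono sphere_subset_closedBall
  rw [circleAverage_fun_add
    (circleIntegrable_div_sub hr0.le (by fun_prop) (sq_notMem_sphere_zero hr0 hr1))
    (circleIntegrable_div_sub hr0.le hsphere (one_notMem_sphere_zero hr1))]
  have hmem : (r : ℂ) ^ 2 ∈ ball (0 : ℂ) |r| := by
    simp only [hr, mem_ball_zero_iff, norm_pow, norm_real, Real.norm_eq_abs]
    nlinarith
  have hcauchy :=
    (hf.diffContOnCl_ball (c := 0) (R := |r|) (by rw [hr])).circleAverage_smul_div hmem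
  have hmean := (hdiff.diffContOnCl_ball (c := 0) (R := |r|) (by rw [hr])).circleAverage
  simp only [sub_zero, smul_eq_mul, div_mul_eq_mul_div] at hcauchy
  rw [hcauchy, hmean]
  ring

open Real (circleAverage circleAverage_congr_sphere circleAverage_fun_smul) in
lemma circleAverage_log_norm_one_sub_mul_mul_mu {w : ℂ} (hw : ‖w‖ < 1) {r : ℝ} (hr0 : 0 < r)
    (hr1 : r < 1) :
    circleAverage (fun z => Real.log ‖1 - w * z‖ * mu z) 0 r
      = -(Complex.log (1 - w * r ^ 2)).im / (2 * r ^ 2) := by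
  set L : ℂ → ℂ := fun z => Complex.log (1 - w * z)
  have hL : DifferentiableOn ℂ L (closedBall 0 r) := fun z hz =>
    (differentiableAt_log_one_sub_mul (norm_mul_lt_one_of_le_one hw
      (by rw [mem_closedBall_zero_iff] at hz; linarith))).differentiableWithinAt
  have hsphere : ContinuousOn L (sphere 0 r) := hL.continuousOn.mono sphere_subset_closedBall
  have hint : CircleIntegrable (fun z => z * L z / (z - r ^ 2) + L z / (z - 1)) 0 r :=
    (circleIntegrable_div_sub hr0.le (by fun_prop) (sq_notMem_sphere_zero hr0 hr1)).add
      (circleIntegrable_div_sub hr0.le hsphere (one_notMem_sphere_zero hr1))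
  calc circleAverage (fun z => Real.log ‖1 - w * z‖ * mu z) 0 r
      = circleAverage (fun z => (-(2 * r ^ 2)⁻¹ : ℝ) •
          imCLM (z * L z / (z - r ^ 2) + L z / (z - 1))) 0 r := by
        refine circleAverage_congr_sphere fun z hz => ?_
        rw [abs_of_pos hr0, mem_sphere_zero_iff_norm] at hz
        rw [← log_re, re_mul_mu_of_norm_eq _ hz hr0.ne', smul_eq_mul, imCLM_apply]
        ring
    _ = -(2 * r ^ 2)⁻¹ * (L (r ^ 2) - L 0).im := by
        rw [circleAverage_fun_smul, smul_eq_mul,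
          ← circleAverage_mul_div_sub_sq_add_div_sub_one hL hr0 hr1]
        congr 1
        exact imCLM.circleAverage_comp_comm hint
    _ = _ := by
        simp only [L, mul_zero, sub_zero, log_one]
        ring

lemma setIntegral_Ioo_circleMap_eq_circleAverage {E : Type*} [NormedAddCommGroup E]
    [NormedSpace ℝ E] (f : ℂ → E) (c : ℂ) (R : ℝ) :
    ∫ θ in Ioo (-π) π, f (circleMap c R θ) = (2 * π) • Real.circleAverage f c R := by
  rw [Real.circleAverage_eq_integral_add (-π), smul_inv_smul₀ (by positivity),
    intervalIntegral.integral_comp_add_right (fun θ => f (circleMap c R θ)),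
    integral_Ioc_eq_integral_Ioo.symm,
    ← intervalIntegral.integral_of_le (by linarith [Real.pi_pos])]
  ring_nf

lemma polarCoord_symm_eq_circleMap (p : ℝ × ℝ) :
    Complex.polarCoord.symm p = circleMap 0 p.1 p.2 := by
  rw [Complex.polarCoord_symm_apply, circleMap_zero, exp_mul_I]
  push_cast
  ring

lemma setIntegral_norm_lt_eq_setIntegral_polar {E : Type*} [NormedAddCommGroup E]
    [NormedSpace ℝ E] (f : ℂ → E) (R : ℝ) :
    ∫ z in {z : ℂ | ‖z‖ < R}, f z
      = ∫ p in Ioo 0 R ×ˢ Ioo (-π) π, p.1 • f (circleMap 0 p.1 p.2) := by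
  have hB : Ioo 0 R ×ˢ Ioo (-π) π = polarCoord.target ∩ {p | p.1 < R} := by
    ext ⟨r, θ⟩
    simp only [polarCoord_target, mem_prod, mem_Ioo, mem_Ioi, mem_inter_iff, mem_ofPred_eq]
    tauto
  rw [← integral_indicator (measurableSet_lt measurable_norm measurable_const),
    ← Complex.integral_comp_polarCoord_symm, hB,
    ← setIntegral_indicator (measurableSet_lt measurable_fst measurable_const)]
  refine setIntegral_congr_fun polarCoord.open_target.measurableSet fun p hp => ?_
  have hr : 0 < p.1 := by rw [polarCoord_target] at hp; exact hp.1
  rw [polarCoord_symm_eq_circleMap]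
  simp [indicator, abs_of_pos hr]

lemma setIntegral_Ioo_mul_log_norm_one_sub_mul_mul_mu {w : ℂ} (hw : ‖w‖ < 1) {r : ℝ}
    (hr0 : 0 < r) (hr1 : r < 1) :
    ∫ θ in Ioo (-π) π, r * (Real.log ‖1 - w * circleMap 0 r θ‖ * mu (circleMap 0 r θ))
      = -π * ((Complex.log (1 - w * r ^ 2)).im / r) := by
  rw [integral_const_mul,
    setIntegral_Ioo_circleMap_eq_circleAverage (fun z => Real.log ‖1 - w * z‖ * mu z),
    circleAverage_log_norm_one_sub_mul_mul_mu hw hr0 hr1, smul_eq_mul]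
  field_simp

lemma abs_log_norm_one_sub_mul_le {w z : ℂ} (hw : ‖w‖ < 1) (hz : ‖z‖ ≤ 1) :
    |Real.log ‖1 - w * z‖| ≤ Real.log 2 - Real.log (1 - ‖w‖) := by
  have hwz : ‖w * z‖ ≤ ‖w‖ := by
    rw [norm_mul]; exact mul_le_of_le_one_right (norm_nonneg _) hz
  have hlow : 1 - ‖w‖ ≤ ‖1 - w * z‖ := by
    have := norm_sub_norm_le 1 (w * z); rw [norm_one] at this; linarith
  have hup : ‖1 - w * z‖ ≤ 2 := (norm_sub_le _ _).trans (by rw [norm_one]; linarith)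
  have hw0 : 0 < 1 - ‖w‖ := by linarith
  have hlog2 : 0 ≤ Real.log 2 := Real.log_nonneg one_le_two
  have hlogw : Real.log (1 - ‖w‖) ≤ 0 := Real.log_nonpos hw0.le (by linarith [norm_nonneg w])
  rw [abs_le]
  constructor
  · linarith [Real.log_le_log hw0 hlow]
  · linarith [Real.log_le_log (hw0.trans_le hlow) hup]

lemma sq_sub_two_mul_mul_cos_add_one_pos {r : ℝ} (hr0 : 0 ≤ r) (hr1 : r < 1) (θ : ℝ) :
    0 < r ^ 2 - 2 * r * Real.cos θ + 1 := by
  nlinarith [Real.cos_le_one θ]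

lemma integral_abs_sin_div {r : ℝ} (hr0 : 0 < r) (hr1 : r < 1) :
    ∫ θ in Ioo (-π) π, |Real.sin θ| / (r ^ 2 - 2 * r * Real.cos θ + 1)
      = 2 / r * Real.log ((1 + r) / (1 - r)) := by
  set d : ℝ → ℝ := fun θ => r ^ 2 - 2 * r * Real.cos θ + 1
  have hd : ∀ θ, 0 < d θ := sq_sub_two_mul_mul_cos_add_one_pos hr0.le hr1
  have hcont : Continuous fun θ => |Real.sin θ| / d θ :=
    (continuous_abs.comp Real.continuous_sin).div (by fun_prop) fun θ => (hd θ).ne'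
  have hderiv : ∀ θ ∈ uIcc 0 π,
      HasDerivAt (fun θ => (2 * r)⁻¹ * Real.log (d θ)) (|Real.sin θ| / d θ) θ := by
    intro θ hθ
    rw [uIcc_of_le Real.pi_pos.le] at hθ
    rw [abs_of_nonneg (Real.sin_nonneg_of_nonneg_of_le_pi hθ.1 hθ.2)]
    have := ((((Real.hasDerivAt_cos θ).const_mul (2 * r)).const_sub (r ^ 2)).add_const 1).log
      (hd θ).ne'
    refine (this.const_mul (2 * r)⁻¹).congr_deriv ?_
    simp only [d]
    field_simp
  have hhalf : ∫ θ in 0..π, |Real.sin θ| / d θ = r⁻¹ * Real.log ((1 + r) / (1 - r)) := by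
    rw [intervalIntegral.integral_eq_sub_of_hasDerivAt hderiv (hcont.intervalIntegrable _ _)]
    have hπ : d π = (1 + r) ^ 2 := by simp only [d, Real.cos_pi]; ring
    have h0 : d 0 = (1 - r) ^ 2 := by simp only [d, Real.cos_zero]; ring
    rw [hπ, h0, ← mul_sub, ← Real.log_div (by positivity) (by nlinarith), ← div_pow,
      Real.log_pow]
    field_simp
    ring
  have heven : ∫ θ in (-π)..0, |Real.sin θ| / d θ = ∫ θ in 0..π, |Real.sin θ| / d θ := by
    have := intervalIntegral.integral_comp_neg (a := 0) (b := π) fun θ => |Real.sin θ| / d θ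
    rw [neg_zero] at this
    simp only [← this, Real.sin_neg, Real.cos_neg, abs_neg, d]
  rw [← integral_Ioc_eq_integral_Ioo,
    ← intervalIntegral.integral_of_le (by linarith [Real.pi_pos]),
    ← intervalIntegral.integral_add_adjacent_intervals (b := 0) (hcont.intervalIntegrable _ _)
      (hcont.intervalIntegrable _ _), heven, hhalf]
  ring

lemma two_div_mul_log_le {r : ℝ} (hr0 : 0 < r) (hr1 : r < 1) :
    2 / r * Real.log ((1 + r) / (1 - r)) ≤ 8 * (1 - r) ^ (-(1 / 2 : ℝ)) := by
  set s := √(1 - r)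
  set t := √(1 + r)
  have hs : 0 < s := Real.sqrt_pos.2 (by linarith)
  have ht : 1 ≤ t := Real.one_le_sqrt.2 (by linarith)
  have hst : s ≤ t := Real.sqrt_le_sqrt (by linarith)
  have hs2 : s ^ 2 = 1 - r := Real.sq_sqrt (by linarith)
  have ht2 : t ^ 2 = 1 + r := Real.sq_sqrt (by linarith)
  have hrpow : (1 - r) ^ (-(1 / 2 : ℝ)) = s⁻¹ := by
    rw [Real.rpow_neg (by linarith), ← Real.sqrt_eq_rpow]
  have hlog : Real.log ((1 + r) / (1 - r)) ≤ 2 * (t / s - 1) := by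
    rw [← hs2, ← ht2, ← div_pow, Real.log_pow]
    push_cast
    linarith [Real.log_le_sub_one_of_pos (div_pos (by linarith : (0:ℝ) < t) hs)]
  -- `t - s ≤ t ^ 2 - s ^ 2 = 2 r` since `t + s ≥ 1`
  have hdiff : t - s ≤ 2 * r := by
    nlinarith [mul_nonneg (sub_nonneg.2 hst) (by linarith : 0 ≤ t + s - 1)]
  rw [hrpow]
  calc 2 / r * Real.log ((1 + r) / (1 - r)) ≤ 2 / r * (2 * (t / s - 1)) := by gcongr
    _ = 4 * (t - s) / (r * s) := by field_simp; ring
    _ ≤ 4 * (2 * r) / (r * s) := by gcongr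
    _ = 8 * s⁻¹ := by field_simp; ring

lemma integrableOn_one_sub_rpow_neg_half :
    IntegrableOn (fun r : ℝ => (1 - r) ^ (-(1 / 2 : ℝ))) (Ioo 0 1) := by
  have h := ((intervalIntegral.intervalIntegrable_rpow' (r := -(1 / 2 : ℝ)) (by norm_num)
    (a := 0) (b := 1)).comp_sub_left 1).symm
  rwa [sub_zero, sub_self, intervalIntegrable_iff_integrableOn_Ioo_of_le zero_le_one] at h

lemma integrableOn_abs_sin_div :
    IntegrableOn (fun p : ℝ × ℝ => |Real.sin p.2| / (p.1 ^ 2 - 2 * p.1 * Real.cos p.2 + 1))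
      (Ioo 0 1 ×ˢ Ioo (-π) π) := by
  set k : ℝ × ℝ → ℝ := fun p => |Real.sin p.2| / (p.1 ^ 2 - 2 * p.1 * Real.cos p.2 + 1)
  have hk : AEStronglyMeasurable k
      ((volume.restrict (Ioo 0 1)).prod (volume.restrict (Ioo (-π) π))) :=
    (by fun_prop : Measurable k).aestronglyMeasurable
  rw [IntegrableOn, Measure.volume_eq_prod, ← Measure.prod_restrict]
  refine (integrable_prod_iff hk).2 ⟨?_, ?_⟩
  · refine (ae_restrict_iff' measurableSet_Ioo).2 (ae_of_all _ fun r hr => ?_)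
    have hcont : Continuous fun θ => k (r, θ) :=
      (continuous_abs.comp Real.continuous_sin).div (by fun_prop)
        fun θ => (sq_sub_two_mul_mul_cos_add_one_pos hr.1.le hr.2 θ).ne'
    exact hcont.integrableOn_Icc.mono_set Ioo_subset_Icc_self
  · refine (integrableOn_one_sub_rpow_neg_half.const_mul 8).mono' hk.norm.integral_prod_right' ?_
    refine (ae_restrict_iff' measurableSet_Ioo).2 (ae_of_all _ fun r hr => ?_)
    have hk0 : ∀ θ, 0 ≤ k (r, θ) := fun θ =>
      div_nonneg (abs_nonneg _) (sq_sub_two_mul_mul_cos_add_one_pos hr.1.le hr.2 θ).le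
    simp only [Real.norm_of_nonneg (hk0 _)]
    rw [Real.norm_of_nonneg (integral_nonneg hk0)]
    exact (integral_abs_sin_div hr.1 hr.2).trans_le (two_div_mul_log_le hr.1 hr.2)

lemma integrableOn_polar_log_norm_one_sub_mul_mul_mu {w : ℂ} (hw : ‖w‖ < 1) :
    IntegrableOn (fun p : ℝ × ℝ =>
        p.1 * (Real.log ‖1 - w * circleMap 0 p.1 p.2‖ * mu (circleMap 0 p.1 p.2)))
      (Ioo 0 1 ×ˢ Ioo (-π) π) := by
  refine (integrableOn_abs_sin_div.const_mul (Real.log 2 - Real.log (1 - ‖w‖))).mono'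
    (Measurable.aestronglyMeasurable (by unfold mu; fun_prop)) ?_
  refine (ae_restrict_iff' (measurableSet_Ioo.prod measurableSet_Ioo)).2
    (ae_of_all _ fun p ⟨hr, _⟩ => ?_)
  have hd := sq_sub_two_mul_mul_cos_add_one_pos hr.1.le hr.2 p.2
  rw [mul_left_comm, mul_mu_circleMap hr.1.ne', norm_mul, norm_div, Real.norm_eq_abs,
    Real.norm_eq_abs, Real.norm_eq_abs, abs_of_pos hd]
  exact mul_le_mul_of_nonneg_right
    (abs_log_norm_one_sub_mul_le hw (by simp [abs_of_pos hr.1, hr.2.le])) (by positivity)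

lemma integral_Ioo_div_eq_two_mul_integral_sq_div (f : ℝ → ℝ) :
    ∫ t in Ioo 0 1, f t / t = 2 * ∫ r in Ioo (0 : ℝ) 1, f (r ^ 2) / r := by
  have himage : (fun r : ℝ => r ^ 2) '' Ioo 0 1 = Ioo 0 1 := by
    ext t
    refine ⟨?_, fun ht => ⟨√t, ⟨Real.sqrt_pos.2 ht.1, ?_⟩, Real.sq_sqrt ht.1.le⟩⟩
    · rintro ⟨r, hr, rfl⟩
      exact ⟨by nlinarith [hr.1], by nlinarith [hr.1, hr.2]⟩
    · simpa using Real.sqrt_lt_sqrt ht.1.le ht.2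
  have hderiv : ∀ r ∈ Ioo (0 : ℝ) 1, HasDerivWithinAt (fun r => r ^ 2) (2 * r) (Ioo 0 1) r :=
    fun r _ => by simpa using (hasDerivAt_pow 2 r).hasDerivWithinAt
  have hinj : InjOn (fun r : ℝ => r ^ 2) (Ioo 0 1) := fun a ha b hb h =>
    (pow_left_inj₀ ha.1.le hb.1.le two_ne_zero).1 h
  conv_lhs => rw [← himage]
  rw [integral_image_eq_integral_abs_deriv_smul measurableSet_Ioo hderiv hinj,
    ← integral_const_mul]
  refine setIntegral_congr_fun measurableSet_Ioo fun r hr => ?_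
  rw [smul_eq_mul, abs_of_pos (by linarith [hr.1])]
  field_simp

lemma integrableOn_log_one_sub_mul_div {w : ℂ} (hw : ‖w‖ < 1) :
    IntegrableOn (fun t : ℝ => Complex.log (1 - w * t) / t) (Ioc 0 1) := by
  set f : ℝ → ℂ := fun t => Complex.log (1 - w * t)
  have hf : ∀ t ∈ Icc (0 : ℝ) 1, DifferentiableAt ℝ f t := fun t ht =>
    (differentiableAt_log_one_sub_mul (norm_mul_lt_one_of_le_one hw
      (by simp [abs_of_nonneg ht.1, ht.2]))).hasDerivAt.comp_ofReal.differentiableAt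
  -- `log (1 - w t) / t` is the slope of `f` at `0`, which extends continuously to `t = 0`
  have hslope : ContinuousOn (dslope f 0) (Icc 0 1) := fun t ht => by
    refine ContinuousAt.continuousWithinAt ?_
    rcases eq_or_ne t 0 with rfl | h
    · exact continuousAt_dslope_same.2 (hf 0 ht)
    · exact (continuousAt_dslope_of_ne h).2 (hf t ht).continuousAt
  refine (hslope.integrableOn_Icc.mono_set Ioc_subset_Icc_self).congr_fun
    (fun t ht => ?_) measurableSet_Ioc
  rw [dslope_of_ne f ht.1.ne', slope_def_module]
  simp [f, div_eq_inv_mul]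

lemma im_Li2 {w : ℂ} (hw : ‖w‖ < 1) :
    (Li2 w).im = -∫ t in Ioo (0 : ℝ) 1, (Complex.log (1 - w * t)).im / t := by
  rw [Li2, neg_im, intervalIntegral.integral_of_le zero_le_one, ← imCLM_apply,
    ← imCLM.integral_comp_comm (integrableOn_log_one_sub_mul_div hw),
    integral_Ioc_eq_integral_Ioo]
  simp [div_ofReal_im]

theorem stmt_19 (w : ℂ) (hw : ‖w‖ < 1) :
    ∫ z in {z : ℂ | ‖z‖ < 1}, Real.log ‖1 - w * z‖ * mu z =
      Real.pi / 2 * (Li2 w).im := by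
  have hpolar := integrableOn_polar_log_norm_one_sub_mul_mul_mu hw
  rw [IntegrableOn, Measure.volume_eq_prod] at hpolar
  rw [setIntegral_norm_lt_eq_setIntegral_polar, Measure.volume_eq_prod]
  simp only [smul_eq_mul]
  rw [setIntegral_prod _ hpolar,
    setIntegral_congr_fun measurableSet_Ioo fun r hr =>
      setIntegral_Ioo_mul_log_norm_one_sub_mul_mul_mu hw hr.1 hr.2,
    integral_const_mul, im_Li2 hw,
    integral_Ioo_div_eq_two_mul_integral_sq_div fun t => (Complex.log (1 - w * t)).im]
  push_cast
  ring
end
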